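/- arXiv:1012.5918 — 2 statements merged into one kernel-verified Lean document; each statement's English description precedes it below -/
import Mathlib

section
/- Let A, B, C be affinely independent points in the Euclidean plane ℝ² with side lengths a = dist(B,C), b = dist(C,A), c = dist(A,B), and let h > 0. Define G : ℝ² → ℝ by G(D) = a·√(d(D, ℓ_{BC})² + h²) + b·√(d(D, ℓ_{CA})² + h²) + c·√(d(D, ℓ_{AB})² + h²), where d(D, ℓ) denotes the Euclidean distance from D to the line ℓ through the indicated pair of vertices. Then G attains its global minimum over ℝ² exactly at the incenter of the triangle ABC; in particular, the minimizer is unique, lies in the interior of the triangle, and its three distances to the side lines are all equal to the inradius r = 2S/(a+b+c), where S is the area of the triangle. -/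
/-- The line in the Euclidean plane through two points, as a set. -/
noncomputable def sideLine (X Y : EuclideanSpace ℝ (Fin 2)) : Set (EuclideanSpace ℝ (Fin 2)) :=
  (affineSpan ℝ {X, Y} : AffineSubspace ℝ (EuclideanSpace ℝ (Fin 2)))

/-- The incenter of the triangle `ABC`, given by its barycentric coordinates
`(a : b : c)` where `a, b, c` are the side lengths. -/
noncomputable def triIncenter (A B C : EuclideanSpace ℝ (Fin 2)) : EuclideanSpace ℝ (Fin 2) :=
  (dist B C + dist C A + dist A B)⁻¹ •
    (dist B C • A + dist C A • B + dist A B • C)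

/-- The area of the triangle `ABC` (the Lebesgue measure of its convex hull). -/
noncomputable def triArea (A B C : EuclideanSpace ℝ (Fin 2)) : ℝ :=
  (MeasureTheory.volume (convexHull ℝ ({A, B, C} : Set (EuclideanSpace ℝ (Fin 2))))).toReal

/-!
Write `e₁(D), e₂(D), e₃(D)` for the signed doubled areas of the triangles `DBC, DCA, DAB` and
`dᵢ(D)` for the distances from `D` to the corresponding side lines. The `eᵢ(D)` add up to the signed
doubled area `Δ` of `ABC`, and `a d₁ = |e₁|`, `b d₂ = |e₂|`, `c d₃ = |e₃|`, so
`a d₁ + b d₂ + c d₃ ≥ |Δ| = 2S = (a + b + c) r` for every `D`, with equality at the incenter `I`,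
where all `dᵢ = r`. The function `d ↦ √(d² + h²)` lies above its tangent line at `r`:
`√(r² + h²) √(d² + h²) ≥ d r + h²`. Summing with weights `a, b, c` gives
`√(r² + h²) G(D) ≥ r (a d₁ + b d₂ + c d₃) + (a + b + c) h² ≥ (a + b + c)(r² + h²)`,
which is `√(r² + h²) G(I)`.
Equality forces every `dᵢ(D) = r`; then `∑ |eᵢ(D)| = |∑ eᵢ(D)|`, so every `eᵢ(D)` has the sign
of `Δ` and hence equals `eᵢ(I)`, which determines `D = I`.
-/

open Metric Set MeasureTheory Pointwise

local notation "ℝ²" => EuclideanSpace ℝ (Fin 2)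

lemma mul_add_sq_le_sqrt_mul_sqrt (d r h : ℝ) :
    d * r + h ^ 2 ≤ √(r ^ 2 + h ^ 2) * √(d ^ 2 + h ^ 2) := by
  rw [← Real.sqrt_mul (by positivity)]
  exact Real.le_sqrt_of_sq_le (by nlinarith [sq_nonneg (h * (d - r))])

lemma eq_of_sqrt_mul_sqrt_eq_mul_add_sq {d r h : ℝ} (hh : h ≠ 0)
    (he : √(r ^ 2 + h ^ 2) * √(d ^ 2 + h ^ 2) = d * r + h ^ 2) : d = r := by
  rw [← Real.sqrt_mul (by positivity)] at he
  have hsq := Real.sq_sqrt (by positivity : 0 ≤ (r ^ 2 + h ^ 2) * (d ^ 2 + h ^ 2))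
  rw [he] at hsq
  have : h ^ 2 * (d - r) ^ 2 = 0 := by linear_combination -hsq
  simpa [hh, sub_eq_zero] using this

section TangentLine

variable {ι : Type*} (s : Finset ι) {w d : ι → ℝ} {r : ℝ}

lemma sum_mul_sq_add_sq_le_sum_mul_add_sq (hr : 0 ≤ r) (h : ℝ)
    (hd : (∑ i ∈ s, w i) * r ≤ ∑ i ∈ s, w i * d i) :
    (∑ i ∈ s, w i) * (r ^ 2 + h ^ 2) ≤ ∑ i ∈ s, w i * (d i * r + h ^ 2) := by
  simp only [mul_add, Finset.sum_add_distrib, ← Finset.sum_mul, ← mul_assoc]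
  linarith [mul_le_mul_of_nonneg_right hd hr]

theorem mul_sqrt_le_sum_mul_sqrt (hw : ∀ i ∈ s, 0 ≤ w i) (hr : 0 ≤ r) (h : ℝ)
    (hd : (∑ i ∈ s, w i) * r ≤ ∑ i ∈ s, w i * d i) :
    (∑ i ∈ s, w i) * √(r ^ 2 + h ^ 2) ≤ ∑ i ∈ s, w i * √(d i ^ 2 + h ^ 2) := by
  set K := √(r ^ 2 + h ^ 2)
  have hK : K ^ 2 = r ^ 2 + h ^ 2 := Real.sq_sqrt (by positivity)
  rcases (show 0 ≤ K from Real.sqrt_nonneg _).eq_or_lt with hK0 | hKpos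
  · rw [← hK0, mul_zero]
    exact Finset.sum_nonneg fun i hi ↦ mul_nonneg (hw i hi) (Real.sqrt_nonneg _)
  refine le_of_mul_le_mul_left ?_ hKpos
  calc K * ((∑ i ∈ s, w i) * K) = (∑ i ∈ s, w i) * (r ^ 2 + h ^ 2) := by rw [← hK]; ring
    _ ≤ ∑ i ∈ s, w i * (d i * r + h ^ 2) := sum_mul_sq_add_sq_le_sum_mul_add_sq s hr h hd
    _ ≤ ∑ i ∈ s, w i * (K * √(d i ^ 2 + h ^ 2)) := Finset.sum_le_sum fun i hi ↦
      mul_le_mul_of_nonneg_left (mul_add_sq_le_sqrt_mul_sqrt _ _ _) (hw i hi)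
    _ = K * ∑ i ∈ s, w i * √(d i ^ 2 + h ^ 2) := by
      rw [Finset.mul_sum]; exact Finset.sum_congr rfl fun i _ ↦ by ring

theorem eq_of_mul_sqrt_eq_sum_mul_sqrt (hw : ∀ i ∈ s, 0 ≤ w i) (hr : 0 ≤ r) {h : ℝ} (hh : h ≠ 0)
    (hd : (∑ i ∈ s, w i) * r ≤ ∑ i ∈ s, w i * d i)
    (heq : (∑ i ∈ s, w i) * √(r ^ 2 + h ^ 2) = ∑ i ∈ s, w i * √(d i ^ 2 + h ^ 2)) :
    ∀ i ∈ s, 0 < w i → d i = r := by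
  set K := √(r ^ 2 + h ^ 2)
  have hK : K ^ 2 = r ^ 2 + h ^ 2 := Real.sq_sqrt (by positivity)
  have hterm : ∀ i ∈ s, w i * (d i * r + h ^ 2) ≤ w i * (K * √(d i ^ 2 + h ^ 2)) := fun i hi ↦
    mul_le_mul_of_nonneg_left (mul_add_sq_le_sqrt_mul_sqrt _ _ _) (hw i hi)
  have hsum : ∑ i ∈ s, w i * (d i * r + h ^ 2) = ∑ i ∈ s, w i * (K * √(d i ^ 2 + h ^ 2)) := by
    refine le_antisymm (Finset.sum_le_sum hterm) ?_
    calc ∑ i ∈ s, w i * (K * √(d i ^ 2 + h ^ 2)) = K * ∑ i ∈ s, w i * √(d i ^ 2 + h ^ 2) := by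
          rw [Finset.mul_sum]; exact Finset.sum_congr rfl fun i _ ↦ by ring
      _ = (∑ i ∈ s, w i) * (r ^ 2 + h ^ 2) := by rw [← heq, ← hK]; ring
      _ ≤ ∑ i ∈ s, w i * (d i * r + h ^ 2) := sum_mul_sq_add_sq_le_sum_mul_add_sq s hr h hd
  intro i hi hwi
  exact eq_of_sqrt_mul_sqrt_eq_mul_add_sq hh
    (mul_left_cancel₀ hwi.ne' ((Finset.sum_eq_sum_iff_of_le hterm).1 hsum i hi)).symm

end TangentLine

def det2 (u v : ℝ²) : ℝ := u 0 * v 1 - u 1 * v 0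

lemma det2_sub_smul_self (u w : ℝ²) (t : ℝ) : det2 u (w - t • u) = det2 u w := by
  simp only [det2, PiLp.sub_apply, PiLp.smul_apply, smul_eq_mul]; ring

lemma norm_sq_eq_fin_two (w : ℝ²) : ‖w‖ ^ 2 = w 0 ^ 2 + w 1 ^ 2 := by
  simp [EuclideanSpace.norm_sq_eq, Fin.sum_univ_two]

lemma norm_sub_smul_sq_mul_norm_sq (u w : ℝ²) (t : ℝ) :
    ‖w - t • u‖ ^ 2 * ‖u‖ ^ 2 = det2 u w ^ 2 + (u 0 * w 0 + u 1 * w 1 - t * ‖u‖ ^ 2) ^ 2 := by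
  simp only [norm_sq_eq_fin_two, det2, PiLp.sub_apply, PiLp.smul_apply, smul_eq_mul]; ring

lemma abs_det2_le_norm_mul_norm (u w : ℝ²) : |det2 u w| ≤ ‖u‖ * ‖w‖ := by
  have h := norm_sub_smul_sq_mul_norm_sq u w 0
  rw [zero_smul, sub_zero] at h
  rw [← sq_le_sq₀ (abs_nonneg _) (by positivity), sq_abs, mul_pow, mul_comm, h]
  exact le_add_of_nonneg_right (sq_nonneg _)

lemma norm_mul_norm_sub_smul_eq_abs_det2 {u : ℝ²} (hu : u ≠ 0) (w : ℝ²) :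
    ‖u‖ * ‖w - ((u 0 * w 0 + u 1 * w 1) / ‖u‖ ^ 2) • u‖ = |det2 u w| := by
  rw [← pow_left_inj₀ (by positivity) (abs_nonneg _) two_ne_zero, sq_abs, mul_pow, mul_comm,
    norm_sub_smul_sq_mul_norm_sq, div_mul_cancel₀ _ (by positivity), sub_self]
  ring

theorem dist_mul_infDist_sideLine (X Y D : ℝ²) :
    dist X Y * infDist D (sideLine X Y) = |det2 (Y - X) (D - X)| := by
  rcases eq_or_ne X Y with rfl | hXY
  · simp [det2]
  have hu : Y - X ≠ 0 := sub_ne_zero.2 hXY.symm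
  rw [dist_comm, dist_eq_norm]
  refine le_antisymm ?_ ?_
  · set t := ((Y - X) 0 * (D - X) 0 + (Y - X) 1 * (D - X) 1) / ‖Y - X‖ ^ 2
    have hmem : t • (Y - X) + X ∈ sideLine X Y := smul_vsub_vadd_mem_affineSpan_pair t X Y
    calc ‖Y - X‖ * infDist D (sideLine X Y) ≤ ‖Y - X‖ * dist D (t • (Y - X) + X) := by
          gcongr; exact infDist_le_dist_of_mem hmem
      _ = |det2 (Y - X) (D - X)| := by
          rw [dist_eq_norm, show D - (t • (Y - X) + X) = D - X - t • (Y - X) by abel]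
          exact norm_mul_norm_sub_smul_eq_abs_det2 hu (D - X)
  · rw [← div_le_iff₀' (norm_pos_iff.2 hu)]
    refine (le_infDist ⟨X, left_mem_affineSpan_pair ℝ X Y⟩).2 fun P hP => ?_
    obtain ⟨t, ht⟩ := vadd_left_mem_affineSpan_pair.1 (show (P - X) +ᵥ X ∈ _ by simpa using hP)
    rw [div_le_iff₀' (norm_pos_iff.2 hu), dist_eq_norm, ← sub_sub_sub_cancel_right D P X,
      ← vsub_eq_sub, ← ht, ← det2_sub_smul_self _ (D - X) t]
    exact abs_det2_le_norm_mul_norm _ _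

def stdTriangle : Set (ℝ × ℝ) := {p | 0 ≤ p.1 ∧ 0 ≤ p.2 ∧ p.1 + p.2 ≤ 1}

lemma measurableSet_stdTriangle : MeasurableSet stdTriangle :=
  (measurableSet_le measurable_const measurable_fst).inter
    ((measurableSet_le measurable_const measurable_snd).inter
      (measurableSet_le (measurable_fst.add measurable_snd) measurable_const))

lemma volume_preimage_stdTriangle (x : ℝ) :
    volume (Prod.mk x ⁻¹' stdTriangle) =
      (Icc 0 1).indicator (fun x ↦ ENNReal.ofReal (1 - x)) x := by
  by_cases hx : x ∈ Icc 0 1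
  · have : Prod.mk x ⁻¹' stdTriangle = Icc 0 (1 - x) := by
      ext y
      simp only [stdTriangle, mem_preimage, mem_ofPred_eq, mem_Icc]
      constructor
      · rintro ⟨-, h0, h1⟩; exact ⟨h0, by linarith⟩
      · rintro ⟨h0, h1⟩; exact ⟨hx.1, h0, by linarith⟩
    rw [indicator_of_mem hx, this, Real.volume_Icc, sub_zero]
  · have : Prod.mk x ⁻¹' stdTriangle = ∅ := by
      ext y
      simp only [stdTriangle, mem_preimage, mem_ofPred_eq, mem_Icc, mem_empty_iff_false,
        iff_false] at hx ⊢
      exact fun ⟨h0, hy, h1⟩ ↦ hx ⟨h0, by linarith⟩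
    rw [indicator_of_notMem hx, this, measure_empty]

lemma volume_stdTriangle : volume stdTriangle = ENNReal.ofReal (1 / 2) := by
  rw [Measure.volume_eq_prod, Measure.prod_apply measurableSet_stdTriangle]
  simp_rw [volume_preimage_stdTriangle]
  rw [lintegral_indicator measurableSet_Icc, ← ofReal_integral_eq_lintegral_ofReal]
  · rw [integral_Icc_eq_integral_Ioc, ← intervalIntegral.integral_of_le zero_le_one]
    rw [intervalIntegral.integral_sub intervalIntegrable_const
      intervalIntegral.intervalIntegrable_id]
    norm_num [integral_id]
  · exact (continuous_const.sub continuous_id).integrableOn_Icc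
  · exact (ae_restrict_iff' measurableSet_Icc).2
      (Filter.Eventually.of_forall fun x hx ↦ sub_nonneg.2 hx.2)

lemma convexHull_zero_single_single :
    convexHull ℝ {0, EuclideanSpace.single 0 1, EuclideanSpace.single 1 1} =
      {x : ℝ² | (x 0, x 1) ∈ stdTriangle} := by
  refine Subset.antisymm (convexHull_min ?_ ?_) fun x ⟨h0, h1, h01⟩ ↦ ?_
  · rintro _ (rfl | rfl | rfl) <;> simp [stdTriangle]
  · rintro x ⟨hx0, hx1, hx⟩ y ⟨hy0, hy1, hy⟩ s t hs ht hst
    simp only [mem_ofPred_eq, PiLp.add_apply, PiLp.smul_apply, smul_eq_mul]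
    exact ⟨by positivity, by positivity, by nlinarith⟩
  have hx : x = ∑ i, ![1 - x 0 - x 1, x 0, x 1] i •
      ![0, EuclideanSpace.single 0 1, EuclideanSpace.single 1 1] i := by
    ext i; fin_cases i <;> simp [Fin.sum_univ_three]
  rw [hx]
  exact (convex_convexHull ℝ _).sum_mem (fun i _ ↦ by fin_cases i <;> simp <;> linarith)
    (by simp [Fin.sum_univ_three]; ring) (fun i _ ↦ subset_convexHull ℝ _ (by fin_cases i <;> simp))

lemma volume_convexHull_zero_single_single :
    volume (convexHull ℝ {0, EuclideanSpace.single 0 1, EuclideanSpace.single 1 1} : Set ℝ²) =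
      ENNReal.ofReal (1 / 2) := by
  have hmp : MeasurePreserving (fun x : ℝ² ↦ (x 0, x 1)) :=
    (volume_preserving_finTwoArrow ℝ).comp
      (EuclideanSpace.volume_preserving_symm_measurableEquiv_toLp (Fin 2))
  rw [convexHull_zero_single_single, ← volume_stdTriangle]
  exact hmp.measure_preimage measurableSet_stdTriangle.nullMeasurableSet

noncomputable def linOfCols (P Q : ℝ²) : ℝ² →ₗ[ℝ] ℝ² where
  toFun x := x 0 • P + x 1 • Q
  map_add' x y := by simp only [PiLp.add_apply, add_smul]; abel
  map_smul' c x := by simp only [PiLp.smul_apply, smul_eq_mul, RingHom.id_apply, mul_smul, smul_add]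

lemma det_linOfCols (P Q : ℝ²) : LinearMap.det (linOfCols P Q) = det2 P Q := by
  rw [← LinearMap.det_toMatrix (EuclideanSpace.basisFun (Fin 2) ℝ).toBasis, Matrix.det_fin_two]
  simp [LinearMap.toMatrix_apply, linOfCols, det2]
  ring

theorem volume_convexHull_triple (A B C : ℝ²) :
    volume (convexHull ℝ {A, B, C}) = ENNReal.ofReal (|det2 (B - A) (C - A)| / 2) := by
  have himg : ({A, B, C} : Set ℝ²) = A +ᵥ linOfCols (B - A) (C - A) ''
      {0, EuclideanSpace.single 0 1, EuclideanSpace.single 1 1} := by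
    simp [image_insert_eq, linOfCols, vadd_set_insert]
  rw [himg, convexHull_vadd, ← LinearMap.image_convexHull, measure_vadd,
    Measure.addHaar_image_linearMap, det_linOfCols, volume_convexHull_zero_single_single,
    ← ENNReal.ofReal_mul (abs_nonneg _)]
  ring_nf

theorem triArea_eq_abs_det2 (A B C : ℝ²) : triArea A B C = |det2 (B - A) (C - A)| / 2 := by
  rw [triArea, volume_convexHull_triple, ENNReal.toReal_ofReal (by positivity)]

lemma det2_cyclic_sum (A B C D : ℝ²) :
    det2 (C - B) (D - B) + det2 (A - C) (D - C) + det2 (B - A) (D - A) = det2 (B - A) (C - A) := by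
  simp only [det2, PiLp.sub_apply]; ring

lemma eq_of_det2_sub_eq {u v p q x y : ℝ²} (huv : det2 u v ≠ 0)
    (hu : det2 u (x - p) = det2 u (y - p)) (hv : det2 v (x - q) = det2 v (y - q)) : x = y := by
  simp only [det2, PiLp.sub_apply] at huv hu hv
  ext i; fin_cases i
  · show x 0 = y 0
    exact mul_right_cancel₀ huv (by linear_combination v 0 * hu - u 0 * hv)
  · show x 1 = y 1
    exact mul_right_cancel₀ huv (by linear_combination v 1 * hu - u 1 * hv)

lemma det2_ne_zero_of_affineIndependent {A B C : ℝ²} (h : AffineIndependent ℝ ![A, B, C]) :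
    det2 (B - A) (C - A) ≠ 0 := by
  intro hdet
  rw [← det_linOfCols, LinearMap.det_eq_zero_iff_ker_ne_bot, Submodule.ne_bot_iff] at hdet
  obtain ⟨x, hx, hx0⟩ := hdet
  have hx' : x 0 • (B - A) + x 1 • (C - A) = 0 := hx
  have hw := h.eq_zero_of_sum_eq_zero (s := Finset.univ) (w := ![-(x 0 + x 1), x 0, x 1])
    (by simp [Fin.sum_univ_three])
    (by simp [Fin.sum_univ_three]; linear_combination (norm := module) hx')
  exact hx0 (by ext i; fin_cases i; exacts [hw 1 (by simp), hw 2 (by simp)])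

lemma dist_pos_of_affineIndependent {A B C : ℝ²} (h : AffineIndependent ℝ ![A, B, C]) :
    0 < dist B C ∧ 0 < dist C A ∧ 0 < dist A B := by
  have hdet := det2_ne_zero_of_affineIndependent h
  refine ⟨dist_pos.2 ?_, dist_pos.2 ?_, dist_pos.2 ?_⟩ <;> rintro rfl <;>
    simp [det2, mul_comm] at hdet

noncomputable def triInradius (A B C : ℝ²) : ℝ :=
  2 * triArea A B C / (dist B C + dist C A + dist A B)

lemma perimeter_mul_triInradius {A B C : ℝ²} (h : AffineIndependent ℝ ![A, B, C]) :
    (dist B C + dist C A + dist A B) * triInradius A B C = 2 * triArea A B C := by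
  obtain ⟨ha, hb, hc⟩ := dist_pos_of_affineIndependent h
  rw [triInradius]
  field_simp

lemma abs_det2_eq_perimeter_mul_triInradius {A B C : ℝ²} (h : AffineIndependent ℝ ![A, B, C]) :
    |det2 (B - A) (C - A)| = (dist B C + dist C A + dist A B) * triInradius A B C := by
  rw [perimeter_mul_triInradius h, triArea_eq_abs_det2]
  ring

lemma det2_sub_triIncenter (A B C : ℝ²) (hs : dist B C + dist C A + dist A B ≠ 0) :
    det2 (C - B) (triIncenter A B C - B) =
        dist B C * det2 (B - A) (C - A) / (dist B C + dist C A + dist A B) ∧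
      det2 (A - C) (triIncenter A B C - C) =
        dist C A * det2 (B - A) (C - A) / (dist B C + dist C A + dist A B) ∧
      det2 (B - A) (triIncenter A B C - A) =
        dist A B * det2 (B - A) (C - A) / (dist B C + dist C A + dist A B) := by
  unfold triIncenter
  generalize dist B C = a, dist C A = b, dist A B = c at *
  refine ⟨?_, ?_, ?_⟩ <;>
    simp only [det2, PiLp.sub_apply, PiLp.smul_apply, PiLp.add_apply, smul_eq_mul] <;>
    field_simp <;> ring

theorem infDist_triIncenter_sideLine {A B C : ℝ²} (h : AffineIndependent ℝ ![A, B, C]) :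
    infDist (triIncenter A B C) (sideLine B C) = triInradius A B C ∧
      infDist (triIncenter A B C) (sideLine C A) = triInradius A B C ∧
      infDist (triIncenter A B C) (sideLine A B) = triInradius A B C := by
  obtain ⟨ha, hb, hc⟩ := dist_pos_of_affineIndependent h
  have hs : 0 < dist B C + dist C A + dist A B := by positivity
  obtain ⟨e₁, e₂, e₃⟩ := det2_sub_triIncenter A B C hs.ne'
  have side : ∀ {ℓ d e : ℝ}, 0 < ℓ → ℓ * d = |e| →
      e = ℓ * det2 (B - A) (C - A) / (dist B C + dist C A + dist A B) → d = triInradius A B C := by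
    rintro ℓ d e hℓ hd rfl
    refine mul_left_cancel₀ hℓ.ne' ?_
    rw [hd, abs_div, abs_mul, abs_of_pos hℓ, abs_of_pos hs,
      abs_det2_eq_perimeter_mul_triInradius h]
    field_simp
  exact ⟨side ha (dist_mul_infDist_sideLine _ _ _) e₁, side hb (dist_mul_infDist_sideLine _ _ _) e₂,
    side hc (dist_mul_infDist_sideLine _ _ _) e₃⟩

theorem two_mul_triArea_le (A B C D : ℝ²) :
    2 * triArea A B C ≤ dist B C * infDist D (sideLine B C) + dist C A * infDist D (sideLine C A) +
      dist A B * infDist D (sideLine A B) := by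
  rw [triArea_eq_abs_det2, dist_mul_infDist_sideLine, dist_mul_infDist_sideLine,
    dist_mul_infDist_sideLine, ← det2_cyclic_sum A B C D, mul_div_cancel₀ _ two_ne_zero]
  exact abs_add_three _ _ _

lemma mul_abs_eq_abs_mul_of_abs_add_three_eq {x y z t : ℝ} (hsum : x + y + z = t)
    (h : |x| + |y| + |z| = |t|) : x * |t| = |x| * t := by
  rcases le_total 0 t with ht | ht
  · have hx : |x| = x := by
      rw [abs_of_nonneg ht] at h; linarith [le_abs_self x, le_abs_self y, le_abs_self z]
    rw [abs_of_nonneg ht, hx]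
  · have hx : |x| = -x := by
      rw [abs_of_nonpos ht] at h; linarith [neg_abs_le x, neg_abs_le y, neg_abs_le z]
    rw [abs_of_nonpos ht, hx]; ring

lemma det2_mul_abs_eq_of_infDist_sideLine_eq {A B C D : ℝ²} (h : AffineIndependent ℝ ![A, B, C])
    (hBC : infDist D (sideLine B C) = triInradius A B C)
    (hCA : infDist D (sideLine C A) = triInradius A B C)
    (hAB : infDist D (sideLine A B) = triInradius A B C) :
    det2 (C - B) (D - B) * |det2 (B - A) (C - A)| =
        dist B C * triInradius A B C * det2 (B - A) (C - A) ∧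
      det2 (B - A) (D - A) * |det2 (B - A) (C - A)| =
        dist A B * triInradius A B C * det2 (B - A) (C - A) := by
  have e₁ := dist_mul_infDist_sideLine B C D
  have e₂ := dist_mul_infDist_sideLine C A D
  have e₃ := dist_mul_infDist_sideLine A B D
  rw [hBC] at e₁; rw [hCA] at e₂; rw [hAB] at e₃
  have hsum := det2_cyclic_sum A B C D
  have habs : |det2 (C - B) (D - B)| + |det2 (A - C) (D - C)| + |det2 (B - A) (D - A)| =
      |det2 (B - A) (C - A)| := by
    rw [← e₁, ← e₂, ← e₃, abs_det2_eq_perimeter_mul_triInradius h]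
    ring
  constructor
  · rw [mul_abs_eq_abs_mul_of_abs_add_three_eq hsum habs, ← e₁]
  · rw [mul_abs_eq_abs_mul_of_abs_add_three_eq (y := det2 (C - B) (D - B))
      (z := det2 (A - C) (D - C)) (by linarith) (by linarith), ← e₃]

theorem eq_triIncenter_of_infDist_sideLine_eq {A B C D : ℝ²} (h : AffineIndependent ℝ ![A, B, C])
    (hBC : infDist D (sideLine B C) = triInradius A B C)
    (hCA : infDist D (sideLine C A) = triInradius A B C)
    (hAB : infDist D (sideLine A B) = triInradius A B C) :
    D = triIncenter A B C := by
  have hdet := det2_ne_zero_of_affineIndependent h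
  obtain ⟨hD₁, hD₃⟩ := det2_mul_abs_eq_of_infDist_sideLine_eq h hBC hCA hAB
  obtain ⟨hI₁, hI₃⟩ := det2_mul_abs_eq_of_infDist_sideLine_eq h (infDist_triIncenter_sideLine h).1
    (infDist_triIncenter_sideLine h).2.1 (infDist_triIncenter_sideLine h).2.2
  have habs : |det2 (B - A) (C - A)| ≠ 0 := abs_ne_zero.2 hdet
  refine eq_of_det2_sub_eq (u := C - B) (v := B - A) ?_
    (mul_right_cancel₀ habs (hD₁.trans hI₁.symm)) (mul_right_cancel₀ habs (hD₃.trans hI₃.symm))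
  simp only [det2, PiLp.sub_apply] at hdet ⊢
  contrapose! hdet
  linear_combination -hdet

theorem AffineBasis.affineCombination_mem_interior_convexHull {ι V : Type*} [Fintype ι]
    [NormedAddCommGroup V] [NormedSpace ℝ V] (b : AffineBasis ι ℝ V) {w : ι → ℝ}
    (hw : ∑ i, w i = 1) (hpos : ∀ i, 0 < w i) :
    Finset.univ.affineCombination ℝ b w ∈ interior (convexHull ℝ (range b)) := by
  rw [b.interior_convexHull]
  intro i
  rw [b.coord_apply_combination_of_mem (Finset.mem_univ i) hw]
  exact hpos i

theorem triIncenter_mem_interior_convexHull {A B C : ℝ²} (h : AffineIndependent ℝ ![A, B, C]) :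
    triIncenter A B C ∈ interior (convexHull ℝ {A, B, C}) := by
  have hspan : affineSpan ℝ (range ![A, B, C]) = ⊤ := by
    rw [h.affineSpan_eq_top_iff_card_eq_finrank_add_one]; simp
  let T : AffineBasis (Fin 3) ℝ ℝ² := ⟨![A, B, C], h, hspan⟩
  have hTcoe : ⇑T = ![A, B, C] := rfl
  have hT : range T = {A, B, C} := by rw [hTcoe]; ext; simp; tauto
  obtain ⟨ha, hb, hc⟩ := dist_pos_of_affineIndependent h
  have hs : 0 < dist B C + dist C A + dist A B := by positivity
  set w : Fin 3 → ℝ := (dist B C + dist C A + dist A B)⁻¹ • ![dist B C, dist C A, dist A B]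
  have hw : ∑ i, w i = 1 := by simp [w, Fin.sum_univ_three]; field_simp
  have hmem := T.affineCombination_mem_interior_convexHull hw
    (fun i ↦ by fin_cases i <;> simp [w] <;> positivity)
  rw [Finset.affineCombination_eq_linear_combination _ _ _ hw, hT] at hmem
  convert hmem
  simp [hTcoe, w, Fin.sum_univ_three, triIncenter, smul_add, mul_smul]

/-- For a triangle `ABC` and height `h > 0`, the function
`G(D) = a √(d(D, ℓ_BC)² + h²) + b √(d(D, ℓ_CA)² + h²) + c √(d(D, ℓ_AB)² + h²)`
attains its global minimum over the plane exactly at the incenter; the minimizer is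
unique, lies in the interior of the triangle, and its distances to the three side
lines all equal the inradius `r = 2S/(a+b+c)`. -/
theorem stmt_0 (A B C : EuclideanSpace ℝ (Fin 2))
    (hABC : AffineIndependent ℝ ![A, B, C]) (h : ℝ) (hh : 0 < h)
    (a b c : ℝ) (ha : a = dist B C) (hb : b = dist C A) (hc : c = dist A B)
    (G : EuclideanSpace ℝ (Fin 2) → ℝ)
    (hG : ∀ D, G D =
      a * Real.sqrt (Metric.infDist D (sideLine B C) ^ 2 + h ^ 2) +
      b * Real.sqrt (Metric.infDist D (sideLine C A) ^ 2 + h ^ 2) +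
      c * Real.sqrt (Metric.infDist D (sideLine A B) ^ 2 + h ^ 2))
    (S r : ℝ) (hS : S = triArea A B C) (hr : r = 2 * S / (a + b + c)) :
    (∀ D, G (triIncenter A B C) ≤ G D) ∧
    (∀ D, G D = G (triIncenter A B C) → D = triIncenter A B C) ∧
    triIncenter A B C ∈
      interior (convexHull ℝ ({A, B, C} : Set (EuclideanSpace ℝ (Fin 2)))) ∧
    Metric.infDist (triIncenter A B C) (sideLine B C) = r ∧
    Metric.infDist (triIncenter A B C) (sideLine C A) = r ∧
    Metric.infDist (triIncenter A B C) (sideLine A B) = r := by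
  subst ha hb hc hS
  obtain rfl : r = triInradius A B C := hr
  obtain ⟨hIa, hIb, hIc⟩ := infDist_triIncenter_sideLine hABC
  obtain ⟨ha, hb, hc⟩ := dist_pos_of_affineIndependent hABC
  set w : Fin 3 → ℝ := ![dist B C, dist C A, dist A B]
  set d : ℝ² → Fin 3 → ℝ := fun D ↦
    ![infDist D (sideLine B C), infDist D (sideLine C A), infDist D (sideLine A B)]
  have hGd : ∀ D, G D = ∑ i, w i * √(d D i ^ 2 + h ^ 2) := by simp [hG, w, d, Fin.sum_univ_three]
  have hGI : G (triIncenter A B C) = (∑ i, w i) * √(triInradius A B C ^ 2 + h ^ 2) := by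
    simp [hG, hIa, hIb, hIc, w, Fin.sum_univ_three]; ring
  have hw : ∀ i ∈ Finset.univ, 0 ≤ w i := by simp [w, Fin.forall_fin_succ, dist_nonneg]
  have hρ : 0 ≤ triInradius A B C := by unfold triInradius triArea; positivity
  have hd : ∀ D, (∑ i, w i) * triInradius A B C ≤ ∑ i, w i * d D i := fun D ↦ by
    simpa [w, d, Fin.sum_univ_three, perimeter_mul_triInradius hABC] using
      two_mul_triArea_le A B C D
  refine ⟨fun D ↦ ?_, fun D hD ↦ ?_, triIncenter_mem_interior_convexHull hABC, hIa, hIb, hIc⟩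
  · rw [hGI, hGd]
    exact mul_sqrt_le_sum_mul_sqrt _ hw hρ h (hd D)
  · have hdD := eq_of_mul_sqrt_eq_sum_mul_sqrt _ hw hρ hh.ne' (hd D) (by rw [← hGI, ← hGd, hD])
    exact eq_triIncenter_of_infDist_sideLine_eq hABC (hdD 0 (by simp) ha) (hdD 1 (by simp) hb)
      (hdD 2 (by simp) hc)
end

section
/- Let S > 0 and r > 0 be real numbers. The function h ↦ (S·(1 + √(1 + (h/r)²)))³ / ((S·h/3)²) on (0, ∞) attains its global minimum uniquely at h = 2√2 · r, and the minimum value equals 72·S/r². In particular, for a triangle with area S and inradius r, the height of the isoperimetrically optimal cone over the triangle is 2√2 times the radius of the inscribed circle. -/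
/-!
Put `t = h / r` and `s = √(1 + t²)`, so that `h² = r² (s² - 1)`. Dividing out `s + 1` turns the
ratio into `9 S (1 + s)² / (r² (s - 1))`, and `(1 + s)² - 8 (s - 1) = (s - 3)²` shows that it
exceeds `72 S / r²` by `9 S (s - 3)² / (r² (s - 1)) ≥ 0`, with equality exactly when `s = 3`,
i.e. `t² = 8`.
-/

open Real

lemma one_lt_sqrt_one_add_sq {t : ℝ} (ht : t ≠ 0) : 1 < √(1 + t ^ 2) := by
  rw [lt_sqrt zero_le_one]
  linarith [sq_pos_of_ne_zero ht]

lemma sqrt_one_add_sq_eq_three_iff {t : ℝ} (ht : 0 ≤ t) : √(1 + t ^ 2) = 3 ↔ t = 2 * √2 := by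
  have h8 : (2 * √2) ^ 2 = 8 := by rw [mul_pow, sq_sqrt zero_le_two]; norm_num
  rw [sqrt_eq_iff_eq_sq (by positivity) zero_le_three, ← sq_eq_sq₀ ht (by positivity), h8]
  constructor <;> intro h <;> linarith

lemma cone_ratio_eq_add {S r h : ℝ} (hS : S ≠ 0) (hr : r ≠ 0) (hh : h ≠ 0) :
    (S * (1 + √(1 + (h / r) ^ 2))) ^ 3 / (S * h / 3) ^ 2 =
      72 * S / r ^ 2 +
        9 * S * (√(1 + (h / r) ^ 2) - 3) ^ 2 / (r ^ 2 * (√(1 + (h / r) ^ 2) - 1)) := by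
  set s := √(1 + (h / r) ^ 2)
  have hh2 : h ^ 2 = r ^ 2 * (s ^ 2 - 1) := by
    rw [sq_sqrt (by positivity), div_pow]
    field_simp
    ring
  have hs1 : s - 1 ≠ 0 := sub_ne_zero.mpr (one_lt_sqrt_one_add_sq (div_ne_zero hh hr)).ne'
  have hsum : 72 * S / r ^ 2 + 9 * S * (s - 3) ^ 2 / (r ^ 2 * (s - 1)) =
      9 * S * (1 + s) ^ 2 / (r ^ 2 * (s - 1)) := by
    field_simp
    ring
  rw [hsum, div_eq_div_iff (by positivity) (mul_ne_zero (by positivity) hs1)]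
  linear_combination (-(S ^ 3 * (1 + s) ^ 2)) * hh2

/-- For `S, r > 0`, the function
`h ↦ (S(1 + √(1 + (h/r)²)))³ / (S h / 3)²` on `(0, ∞)` attains its global minimum,
equal to `72 S / r²`, uniquely at `h = 2√2 · r`. -/
theorem stmt_7 (S r : ℝ) (hS : 0 < S) (hr : 0 < r) :
    ∀ h : ℝ, 0 < h →
      72 * S / r ^ 2 ≤
        (S * (1 + Real.sqrt (1 + (h / r) ^ 2))) ^ 3 / (S * h / 3) ^ 2 ∧
      ((S * (1 + Real.sqrt (1 + (h / r) ^ 2))) ^ 3 / (S * h / 3) ^ 2 =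
          72 * S / r ^ 2 ↔ h = 2 * Real.sqrt 2 * r) := by
  intro h hh
  rw [cone_ratio_eq_add hS.ne' hr.ne' hh.ne']
  have hs : 1 < √(1 + (h / r) ^ 2) := one_lt_sqrt_one_add_sq (div_pos hh hr).ne'
  have hexcess : 0 ≤ 9 * S * (√(1 + (h / r) ^ 2) - 3) ^ 2 / (r ^ 2 * (√(1 + (h / r) ^ 2) - 1)) :=
    div_nonneg (by positivity) (mul_nonneg (by positivity) (by linarith))
  refine ⟨le_add_of_nonneg_right hexcess, ?_⟩
  rw [add_eq_left, div_eq_zero_iff, ← div_eq_iff hr.ne',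
    ← sqrt_one_add_sq_eq_three_iff (div_pos hh hr).le]
  simp [hS.ne', hr.ne', sub_eq_zero, hs.ne']
end
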